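/- arXiv:math/0505105 — 5 statements merged into one kernel-verified Lean document; each statement's English description precedes it below -/
import Mathlib

section
/- In the abstract ordered measure-space setting, if f : X → [0,∞) is ≤-decreasing (u ≤ x implies f(x) ≤ f(u)) and measurable, then Sf is ≤-decreasing: for all u, x ∈ X with u ≤ x one has Sf(x) ≤ Sf(u). -/
/-!
Split `X_x` into `X_u` and `X_x \ X_u`. By consistency, the integral of `f` over `X_u` against
`μ_x` is `c · Sf(u)` with `c = μ_x(X_u) ≤ 1`. On `X_x \ X_u` totality forces `u ≤ y`, so
`f ≤ f(u)` there and that part is at most `(1 - c) f(u)`. Finally `f(u) ≤ Sf(u)` because `f ≥ f(u)`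
on `X_u` and `μ_u(X_u) = 1`, so `Sf(x)` is at most a convex combination of `Sf(u)` with itself.
-/

open MeasureTheory Set
open scoped ENNReal NNReal

/-- The abstract Hardy operator `Sf(x) = ∫_{X_x} f dμ_x`, where `X_x = {u | u ≤ x}`. -/
noncomputable def hardyOp {X : Type*} [MeasurableSpace X] [PartialOrder X]
    (μ : X → Measure X) (f : X → ℝ≥0) (x : X) : ℝ≥0∞ :=
  ∫⁻ u in {u : X | u ≤ x}, (f u : ℝ≥0∞) ∂(μ x)

section Measure

variable {X : Type*} [MeasurableSpace X]

theorem setLIntegral_le_of_restrict_eq_smul {ν ρ : Measure X} {A B : Set X} {f : X → ℝ≥0∞}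
    {a : ℝ≥0∞} (hA : MeasurableSet A) (hB : MeasurableSet B) (hAB : A ⊆ B) (hνB : ν B ≤ 1)
    (hνρ : ν.restrict A = ν A • ρ.restrict A) (hfa : ∀ y ∈ B \ A, f y ≤ a)
    (ha : a ≤ ∫⁻ y in A, f y ∂ρ) :
    ∫⁻ y in B, f y ∂ν ≤ ∫⁻ y in A, f y ∂ρ := by
  set I := ∫⁻ y in A, f y ∂ρ
  have hνA : ν A ≤ 1 := (measure_mono hAB).trans hνB
  have hdiff : ν (B \ A) ≤ 1 - ν A := by
    rw [measure_sdiff hAB hA.nullMeasurableSet (ne_top_of_le_ne_top ENNReal.one_ne_top hνA)]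
    exact tsub_le_tsub_right hνB _
  calc ∫⁻ y in B, f y ∂ν
      = ∫⁻ y in A, f y ∂ν + ∫⁻ y in B \ A, f y ∂ν := by
        rw [← lintegral_union (hB.diff hA) disjoint_sdiff_right, union_sdiff_cancel hAB]
    _ ≤ ν A * I + a * (1 - ν A) := by
        gcongr ?_ + ?_
        · rw [hνρ, lintegral_smul_measure, smul_eq_mul]
        · calc ∫⁻ y in B \ A, f y ∂ν ≤ ∫⁻ _ in B \ A, a ∂ν := setLIntegral_mono' (hB.diff hA) hfa
            _ ≤ a * (1 - ν A) := by rw [setLIntegral_const]; gcongr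
    _ ≤ ν A * I + I * (1 - ν A) := by gcongr
    _ = I := by rw [mul_comm I, ← add_mul, add_tsub_cancel_of_le hνA, one_mul]

theorem restrict_eq_smul_restrict_of_forall_subset {ν ρ : Measure X} {A : Set X}
    (hA : MeasurableSet A) (h : ∀ E : Set X, MeasurableSet E → E ⊆ A → ν E = ν A * ρ E) :
    ν.restrict A = ν A • ρ.restrict A := by
  ext E hE
  rw [Measure.restrict_apply hE, Measure.smul_apply, smul_eq_mul, Measure.restrict_apply hE]
  exact h (E ∩ A) (hE.inter hA) inter_subset_right

end Measure

theorem le_hardyOp_self {X : Type*} [MeasurableSpace X] [PartialOrder X] {μ : X → Measure X}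
    {f : X → ℝ≥0} {u : X} (hu : MeasurableSet (Iic u))
    (hone : μ u (Iic u) = 1) (hdec : ∀ y ≤ u, f u ≤ f y) :
    (f u : ℝ≥0∞) ≤ hardyOp μ f u :=
  calc (f u : ℝ≥0∞) = ∫⁻ _ in Iic u, (f u : ℝ≥0∞) ∂(μ u) := by
        rw [setLIntegral_const, hone, mul_one]
    _ ≤ hardyOp μ f u := setLIntegral_mono' hu fun y hy => by exact_mod_cast hdec y hy

theorem stmt3_general {X : Type*} [MeasurableSpace X] [PartialOrder X]
    (μ : X → Measure X)
    (hlowmeas : ∀ D : Set X, IsLowerSet D → MeasurableSet D)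
    (htot : ∀ x u v : X, u ≤ x → v ≤ x → u ≤ v ∨ v ≤ u)
    (hone : ∀ x : X, μ x {u : X | u ≤ x} = 1)
    (hcons : ∀ x u : X, u ≤ x → ∀ E : Set X, MeasurableSet E → E ⊆ {y : X | y ≤ u} →
      μ x E = μ x {y : X | y ≤ u} * μ u E)
    (f : X → ℝ≥0)
    (hdec : ∀ u x : X, u ≤ x → f x ≤ f u)
    (u x : X) (hux : u ≤ x) :
    hardyOp μ f x ≤ hardyOp μ f u := by
  have hmeas : ∀ z : X, MeasurableSet (Iic z) := fun z => hlowmeas _ (isLowerSet_Iic z)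
  have hfar : ∀ y ∈ Iic x \ Iic u, (f y : ℝ≥0∞) ≤ f u := fun y hy => by
    have huy : u ≤ y := (htot x u y hux hy.1).resolve_right hy.2
    exact_mod_cast hdec u y huy
  exact setLIntegral_le_of_restrict_eq_smul (hmeas u) (hmeas x) (Iic_subset_Iic.mpr hux)
    (hone x).le (restrict_eq_smul_restrict_of_forall_subset (hmeas u) (hcons x u hux)) hfar
    (le_hardyOp_self (hmeas u) (hone u) fun y hy => hdec y u hy)

/-- In the abstract partially ordered measure-space setting, if `f` is a
nonnegative measurable `≤`-decreasing function, then `Sf` is `≤`-decreasing: `u ≤ x` implies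
`Sf(x) ≤ Sf(u)`. -/
theorem stmt3 {X : Type*} [MeasurableSpace X] [PartialOrder X]
    (μ : X → Measure X) (hσ : ∀ x : X, SigmaFinite (μ x))
    (hlowmeas : ∀ D : Set X, IsLowerSet D → MeasurableSet D)
    (htot : ∀ x u v : X, u ≤ x → v ≤ x → u ≤ v ∨ v ≤ u)
    (hone : ∀ x : X, μ x {u : X | u ≤ x} = 1)
    (hcons : ∀ x u : X, u ≤ x → ∀ E : Set X, MeasurableSet E → E ⊆ {y : X | y ≤ u} →
      μ x E = μ x {y : X | y ≤ u} * μ u E)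
    (f : X → ℝ≥0) (hf : Measurable f)
    (hdec : ∀ u x : X, u ≤ x → f x ≤ f u)
    (u x : X) (hux : u ≤ x) :
    hardyOp μ f x ≤ hardyOp μ f u :=
  stmt3_general μ hlowmeas htot hone hcons f hdec u x hux
end

section
/- Let u be a weight on (0,∞), 0 < p < ∞ and C > 0. If for every decreasing sequence (a_n)_{n≥0} ⊆ [0,1] one has ∑_{n=0}^∞ ∫_{a_n}^1 (a_n/t)^p u(n+t) dt ≤ C ∑_{n=0}^∞ ∫_0^{a_n} u(n+t) dt, then for every n ∈ ℕ ∪ {0} and every a ∈ [0,1] one has ∫_a^1 (a/t)^p u(n+t) dt ≤ C ∫_0^{n+a} u(t) dt. -/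
open MeasureTheory Set
open scoped ENNReal NNReal

/-! Testing the hypothesis on the staircase sequence that is `1` before index `n`, `a` at `n` and
`0` after it kills every left-hand term except the `n`-th one (the interval `(1,1]` is empty and
`(0/t)^p = 0`), while the right-hand terms `∫_0^{a_k} u(k+t) dt` tile `∫_0^{n+a} u`. -/

theorem setLIntegral_Ioc_comp_const_add (f : ℝ → ℝ≥0∞) (c a b : ℝ) :
    ∫⁻ t in Ioc a b, f (c + t) = ∫⁻ t in Ioc (c + a) (c + b), f t := by
  rw [(measurePreserving_add_left volume c).setLIntegral_comp_emb
    (measurableEmbedding_addLeft c), image_const_add_Ioc]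

theorem sum_setLIntegral_Ioc_nat_succ (f : ℝ → ℝ≥0∞) (n : ℕ) :
    ∑ k ∈ Finset.range n, ∫⁻ t in Ioc (k : ℝ) (k + 1), f t = ∫⁻ t in Ioc (0 : ℝ) n, f t := by
  induction n with
  | zero => simp
  | succ n ih =>
    rw [Finset.sum_range_succ, ih, Nat.cast_succ, ← lintegral_union measurableSet_Ioc
      (Ioc_disjoint_Ioc_of_le le_rfl), Ioc_union_Ioc_eq_Ioc n.cast_nonneg (by linarith)]

def staircase (n : ℕ) (a : ℝ) (k : ℕ) : ℝ :=
  if k < n then 1 else if k = n then a else 0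

section staircase

variable {n k : ℕ} {a : ℝ}

theorem staircase_of_lt (h : k < n) : staircase n a k = 1 := if_pos h

@[simp]
theorem staircase_self : staircase n a n = a := by simp [staircase]

theorem staircase_of_gt (h : n < k) : staircase n a k = 0 := by
  simp [staircase, h.not_gt, h.ne']

theorem staircase_mem_Icc (ha : a ∈ Icc (0 : ℝ) 1) (k : ℕ) : staircase n a k ∈ Icc (0 : ℝ) 1 := by
  unfold staircase
  split_ifs
  exacts [⟨zero_le_one, le_rfl⟩, ha, ⟨le_rfl, zero_le_one⟩]

theorem antitone_staircase (ha : a ∈ Icc (0 : ℝ) 1) : Antitone (staircase n a) := by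
  intro j k hjk
  unfold staircase
  split_ifs <;> first | rfl | exact ha.1 | exact ha.2 | exact zero_le_one | omega

theorem tsum_setLIntegral_Ioc_staircase_one {p : ℝ} (hp : 0 < p) (g : ℕ → ℝ → ℝ≥0∞) :
    ∑' k, ∫⁻ t in Ioc (staircase n a k) 1, ENNReal.ofReal ((staircase n a k / t) ^ p) * g k t =
      ∫⁻ t in Ioc a 1, ENNReal.ofReal ((a / t) ^ p) * g n t := by
  rw [tsum_eq_single n fun k hk => ?_, staircase_self]
  rcases hk.lt_or_gt with hlt | hgt
  · simp [staircase_of_lt hlt]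
  · simp [staircase_of_gt hgt, Real.zero_rpow hp.ne']

theorem tsum_setLIntegral_Ioc_zero_staircase (f : ℝ → ℝ≥0∞) (ha : 0 ≤ a) :
    ∑' k, ∫⁻ t in Ioc (0 : ℝ) (staircase n a k), f (k + t) = ∫⁻ t in Ioc (0 : ℝ) (n + a), f t := by
  have hvanish : ∀ k ∉ Finset.range (n + 1),
      ∫⁻ t in Ioc (0 : ℝ) (staircase n a k), f (k + t) = 0 := fun k hk => by
    simp [staircase_of_gt (by simpa [Nat.lt_succ_iff] using hk)]
  rw [tsum_eq_sum hvanish, Finset.sum_range_succ, staircase_self,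
    Finset.sum_congr rfl fun k hk => by rw [staircase_of_lt (Finset.mem_range.mp hk)]]
  simp only [setLIntegral_Ioc_comp_const_add, add_zero]
  rw [sum_setLIntegral_Ioc_nat_succ, ← lintegral_union measurableSet_Ioc
    (Ioc_disjoint_Ioc_of_le le_rfl), Ioc_union_Ioc_eq_Ioc n.cast_nonneg (by linarith)]

end staircase

theorem stmt9_general (u : ℝ → ℝ≥0)
    (p : ℝ) (hp : 0 < p) (C : ℝ)
    (h : ∀ a : ℕ → ℝ, (∀ n, a n ∈ Set.Icc (0 : ℝ) 1) → Antitone a →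
      ∑' n : ℕ, ∫⁻ t in Set.Ioc (a n) 1,
          ENNReal.ofReal ((a n / t) ^ p) * (u ((n : ℝ) + t) : ℝ≥0∞) ≤
        ENNReal.ofReal C *
          ∑' n : ℕ, ∫⁻ t in Set.Ioc (0 : ℝ) (a n), (u ((n : ℝ) + t) : ℝ≥0∞)) :
    ∀ n : ℕ, ∀ a ∈ Set.Icc (0 : ℝ) 1,
      ∫⁻ t in Set.Ioc a 1, ENNReal.ofReal ((a / t) ^ p) * (u ((n : ℝ) + t) : ℝ≥0∞) ≤
        ENNReal.ofReal C * ∫⁻ t in Set.Ioc (0 : ℝ) ((n : ℝ) + a), (u t : ℝ≥0∞) := by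
  intro n a ha
  have key := h (staircase n a) (staircase_mem_Icc ha) (antitone_staircase ha)
  rwa [tsum_setLIntegral_Ioc_staircase_one hp,
    tsum_setLIntegral_Ioc_zero_staircase (fun t => (u t : ℝ≥0∞)) ha.1] at key

/-- If for every decreasing sequence `(a_n) ⊆ [0,1]` one has
`∑_n ∫_{a_n}^1 (a_n/t)^p u(n+t) dt ≤ C ∑_n ∫_0^{a_n} u(n+t) dt`, then for every `n ∈ ℕ`
and `a ∈ [0,1]` one has `∫_a^1 (a/t)^p u(n+t) dt ≤ C ∫_0^{n+a} u(t) dt`. -/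
theorem stmt9 (u : ℝ → ℝ≥0) (hu : Measurable u)
    (hloc : MeasureTheory.LocallyIntegrableOn (fun t => (u t : ℝ)) (Set.Ioi 0))
    (p : ℝ) (hp : 0 < p) (C : ℝ) (hC : 0 < C)
    (h : ∀ a : ℕ → ℝ, (∀ n, a n ∈ Set.Icc (0 : ℝ) 1) → Antitone a →
      ∑' n : ℕ, ∫⁻ t in Set.Ioc (a n) 1,
          ENNReal.ofReal ((a n / t) ^ p) * (u ((n : ℝ) + t) : ℝ≥0∞) ≤
        ENNReal.ofReal C *
          ∑' n : ℕ, ∫⁻ t in Set.Ioc (0 : ℝ) (a n), (u ((n : ℝ) + t) : ℝ≥0∞)) :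
    ∀ n : ℕ, ∀ a ∈ Set.Icc (0 : ℝ) 1,
      ∫⁻ t in Set.Ioc a 1, ENNReal.ofReal ((a / t) ^ p) * (u ((n : ℝ) + t) : ℝ≥0∞) ≤
        ENNReal.ofReal C * ∫⁻ t in Set.Ioc (0 : ℝ) ((n : ℝ) + a), (u t : ℝ≥0∞) :=
  stmt9_general u p hp C h
end

section
/- Let u₁, u₂ be weights on (0,∞) with 0 < ∫_0^r u_j(t) dt < ∞ for all r > 0 (j = 1,2), and set u(x,y) = u₁(x)u₂(y). Then ‖u‖_{B₁((0,∞)²)} = ‖u₁‖_{B₁} · ‖u₂‖_{B₁}, where ‖u‖_{B₁((0,∞)²)} = sup_D (∫_{(0,∞)²} Sχ_D(s,t) u(s,t) ds dt) / (∫_D u(s,t) ds dt), the supremum taken over all decreasing sets D ⊆ (0,∞)² with 0 < ∫_D u < ∞, and ‖v‖_{B₁} = sup_{r>0} (∫_0^∞ min(1, r/x) v(x) dx) / (∫_0^r v(x) dx) for a weight v on (0,∞). -/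
open MeasureTheory Set
open scoped ENNReal NNReal

/-- A set `D ⊆ (0,∞)²` is decreasing if its indicator is decreasing in each variable. -/
def DecSet2 (D : Set (ℝ × ℝ)) : Prop :=
  D ⊆ Set.Ioi 0 ×ˢ Set.Ioi 0 ∧
    ∀ z ∈ D, ∀ w : ℝ × ℝ, 0 < w.1 → w.1 ≤ z.1 → 0 < w.2 → w.2 ≤ z.2 → w ∈ D

/-- The two-dimensional Hardy operator `Sf(x,y) = (1/(xy)) ∫₀^x ∫₀^y f(s,t) dt ds`. -/
noncomputable def hardy2 (f : ℝ × ℝ → ℝ≥0) (z : ℝ × ℝ) : ℝ≥0∞ :=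
  (∫⁻ w in Set.Ioc 0 z.1 ×ˢ Set.Ioc 0 z.2, (f w : ℝ≥0∞)) / ENNReal.ofReal (z.1 * z.2)

/-- The `B₁((0,∞)²)` "norm" of a weight `u` on `(0,∞)²`:
`sup_D (∫_{(0,∞)²} Sχ_D · u) / (∫_D u)`, the supremum over all decreasing sets `D`
with `0 < ∫_D u < ∞`. -/
noncomputable def B1norm2 (u : ℝ × ℝ → ℝ≥0) : ℝ≥0∞ :=
  ⨆ (D : Set (ℝ × ℝ)) (_ : DecSet2 D) (_ : 0 < ∫⁻ z in D, (u z : ℝ≥0∞))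
      (_ : ∫⁻ z in D, (u z : ℝ≥0∞) < ⊤),
    (∫⁻ z in Set.Ioi (0 : ℝ) ×ˢ Set.Ioi (0 : ℝ),
        hardy2 (D.indicator fun _ => (1 : ℝ≥0)) z * (u z : ℝ≥0∞)) /
      ∫⁻ z in D, (u z : ℝ≥0∞)

/-- The `B₁` "norm" of a weight `v` on `(0,∞)`:
`sup_{r>0} (∫_0^∞ min(1, r/x) v(x) dx) / (∫_0^r v(x) dx)`. -/
noncomputable def B1norm1 (v : ℝ → ℝ≥0) : ℝ≥0∞ :=
  ⨆ (r : ℝ) (_ : 0 < r),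
    (∫⁻ x in Set.Ioi (0 : ℝ), ENNReal.ofReal (min 1 (r / x)) * (v x : ℝ≥0∞)) /
      ∫⁻ x in Set.Ioc (0 : ℝ) r, (v x : ℝ≥0∞)

/-!
Write `S* v (s) = ∫_s^∞ v(x)/x dx` for the adjoint Hardy operator (`hardyAdj`). By Tonelli,
`∫_0^∞ min(1, r/x) v(x) dx = ∫_0^r S* v`, and for a product weight
`∫∫ Sχ_D · u₁ ⊗ u₂ = ∫_D S* u₁(s) S* u₂(t) ds dt`. So `‖v‖_{B₁}` is the best constant in
`∫_S S* v ≤ C ∫_S v` over the intervals `S = (0, r]`, hence over all decreasing `S ⊆ (0, ∞)`.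
Rectangles `(0, r] × (0, s]` give `‖u₁‖_{B₁} ‖u₂‖_{B₁} ≤ ‖u‖_{B₁}`. Conversely, all sections of a
decreasing `D` are decreasing, so the one-dimensional inequality, applied in `t` for each fixed
`s` and then in `s` for each fixed `t`, trades `S* u₂` for `u₂` and then `S* u₁` for `u₁`.
A decreasing set need not be measurable, but it differs from a measurable decreasing set by a
subset of the graph of its (antitone) height function, which is null.
-/

theorem lintegral_measure_inter_Iic_mul {α : Type*} [MeasurableSpace α] [TopologicalSpace α]
    [OpensMeasurableSpace α] [SecondCountableTopology α] [PartialOrder α] [OrderClosedTopology α]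
    {μ ν : Measure α} [SFinite μ] [SFinite ν] {A : Set α} (hA : MeasurableSet A)
    {w : α → ℝ≥0∞} (hw : Measurable w) :
    ∫⁻ z, μ (A ∩ Iic z) * w z ∂ν = ∫⁻ a in A, ∫⁻ z in Ici a, w z ∂ν ∂μ := by
  classical
  let E : Set (α × α) := A ×ˢ univ ∩ {p | p.1 ≤ p.2}
  have hE : MeasurableSet E :=
    (hA.prod MeasurableSet.univ).inter (measurableSet_le measurable_fst measurable_snd)
  have hmem : ∀ a z, (a, z) ∈ E ↔ a ∈ A ∧ a ≤ z := by simp [E]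
  calc ∫⁻ z, μ (A ∩ Iic z) * w z ∂ν
      = ∫⁻ z, ∫⁻ a, E.indicator (fun p => w p.2) (a, z) ∂μ ∂ν := by
        refine lintegral_congr fun z => ?_
        rw [mul_comm, ← lintegral_indicator_const (hA.inter measurableSet_Iic)]
        congr 1 with a
        simp only [indicator_apply, hmem, mem_inter_iff, mem_Iic]
    _ = ∫⁻ a, ∫⁻ z, E.indicator (fun p => w p.2) (a, z) ∂ν ∂μ :=
        lintegral_lintegral_swap (f := fun z a => E.indicator (fun p => w p.2) (a, z))
          (((hw.comp measurable_snd).indicator hE).comp measurable_swap).aemeasurable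
    _ = ∫⁻ a in A, ∫⁻ z in Ici a, w z ∂ν ∂μ := by
        rw [← lintegral_indicator hA]
        congr 1 with a
        by_cases ha : a ∈ A
        · rw [indicator_of_mem ha, ← lintegral_indicator measurableSet_Ici]
          congr 1 with z
          simp only [indicator_apply, hmem, mem_Ici, ha, true_and]
        · simp [hmem, ha]

section SectionIntegrals

variable {α β : Type*} [MeasurableSpace α] [MeasurableSpace β] {μ : Measure α} {ν : Measure β}
  {D : Set (α × β)}

theorem setLIntegral_prod_mul [SFinite μ] [SFinite ν] {f : α → ℝ≥0∞} {g : β → ℝ≥0∞}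
    (hf : AEMeasurable f μ) (hg : AEMeasurable g ν) (s : Set α) (t : Set β) :
    ∫⁻ z in s ×ˢ t, f z.1 * g z.2 ∂μ.prod ν = (∫⁻ x in s, f x ∂μ) * ∫⁻ y in t, g y ∂ν := by
  rw [← Measure.prod_restrict]
  exact lintegral_prod_mul hf.restrict hg.restrict

theorem setLIntegral_prod_eq_lintegral_setLIntegral [SFinite ν] (hD : MeasurableSet D)
    {F : α × β → ℝ≥0∞} (hF : Measurable F) :
    ∫⁻ z in D, F z ∂μ.prod ν = ∫⁻ x, ∫⁻ y in Prod.mk x ⁻¹' D, F (x, y) ∂ν ∂μ := by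
  rw [← lintegral_indicator hD, lintegral_prod _ (hF.indicator hD).aemeasurable]
  congr 1 with x
  rw [← lintegral_indicator (measurable_prodMk_left hD)]
  rfl

theorem setLIntegral_mul_le_of_forall_setLIntegral_le [SFinite ν] (hD : MeasurableSet D)
    {f : α → ℝ≥0∞} {g h : β → ℝ≥0∞} (hf : Measurable f) (hg : Measurable g) (hh : Measurable h)
    {C : ℝ≥0∞}
    (hsec : ∀ x, ∫⁻ y in Prod.mk x ⁻¹' D, g y ∂ν ≤ C * ∫⁻ y in Prod.mk x ⁻¹' D, h y ∂ν) :
    ∫⁻ z in D, f z.1 * g z.2 ∂μ.prod ν ≤ C * ∫⁻ z in D, f z.1 * h z.2 ∂μ.prod ν := by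
  have hfh : Measurable fun z : α × β => f z.1 * h z.2 := by fun_prop
  calc ∫⁻ z in D, f z.1 * g z.2 ∂μ.prod ν
      = ∫⁻ x, ∫⁻ y in Prod.mk x ⁻¹' D, f x * g y ∂ν ∂μ :=
        setLIntegral_prod_eq_lintegral_setLIntegral hD (by fun_prop)
    _ ≤ ∫⁻ x, ∫⁻ y in Prod.mk x ⁻¹' D, C * (f x * h y) ∂ν ∂μ := by
        refine lintegral_mono fun x => ?_
        rw [lintegral_const_mul _ hg, lintegral_const_mul _ (hh.const_mul _),
          lintegral_const_mul _ hh, mul_left_comm]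
        exact mul_le_mul_right (hsec x) _
    _ = ∫⁻ z in D, C * (f z.1 * h z.2) ∂μ.prod ν :=
        (setLIntegral_prod_eq_lintegral_setLIntegral hD (hfh.const_mul C)).symm
    _ = C * ∫⁻ z in D, f z.1 * h z.2 ∂μ.prod ν := lintegral_const_mul C hfh

theorem setLIntegral_mul_le_of_forall_setLIntegral_le' [SFinite μ] [SFinite ν]
    (hD : MeasurableSet D) {f : β → ℝ≥0∞} {g h : α → ℝ≥0∞} (hf : Measurable f)
    (hg : Measurable g) (hh : Measurable h) {C : ℝ≥0∞}
    (hsec : ∀ y, ∫⁻ x in (·, y) ⁻¹' D, g x ∂μ ≤ C * ∫⁻ x in (·, y) ⁻¹' D, h x ∂μ) :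
    ∫⁻ z in D, g z.1 * f z.2 ∂μ.prod ν ≤ C * ∫⁻ z in D, h z.1 * f z.2 ∂μ.prod ν := by
  have hswap {F : α × β → ℝ≥0∞} (hF : Measurable F) :
      ∫⁻ z in D, F z ∂μ.prod ν = ∫⁻ z in Prod.swap ⁻¹' D, F z.swap ∂ν.prod μ :=
    (Measure.measurePreserving_swap.setLIntegral_comp_preimage hD hF).symm
  rw [hswap (by fun_prop), hswap (by fun_prop)]
  simp only [Prod.fst_swap, Prod.snd_swap, mul_comm (g _), mul_comm (h _)]
  exact setLIntegral_mul_le_of_forall_setLIntegral_le (hD.preimage measurable_swap) hf hg hh hsec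

end SectionIntegrals

def IocIntegralsPosFinite (v : ℝ → ℝ≥0) : Prop :=
  ∀ r : ℝ, 0 < r →
    0 < ∫⁻ t in Ioc (0 : ℝ) r, (v t : ℝ≥0∞) ∧ ∫⁻ t in Ioc (0 : ℝ) r, (v t : ℝ≥0∞) < ⊤

def DecSet1 (S : Set ℝ) : Prop :=
  S ⊆ Ioi 0 ∧ ∀ s ∈ S, ∀ s' : ℝ, 0 < s' → s' ≤ s → s' ∈ S

noncomputable def hardyAdj (v : ℝ → ℝ≥0) (s : ℝ) : ℝ≥0∞ := ∫⁻ x in Ici s, v x / ENNReal.ofReal x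

section OneDimensional

variable {v : ℝ → ℝ≥0}

theorem measurable_hardyAdj : Measurable (hardyAdj v) :=
  Antitone.measurable fun _ _ hst => lintegral_mono_set (Ici_subset_Ici.2 hst)

theorem ENNReal.ofReal_min_div_ofReal {x : ℝ} (r : ℝ) (hx : 0 < x) :
    ENNReal.ofReal (min r x) / ENNReal.ofReal x = ENNReal.ofReal (min 1 (r / x)) := by
  rw [← ENNReal.ofReal_div_of_pos hx, ← min_div_div_right hx.le, div_self hx.ne', min_comm]

theorem setLIntegral_Ioc_hardyAdj (hv : Measurable v) (r : ℝ) :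
    ∫⁻ s in Ioc 0 r, hardyAdj v s =
      ∫⁻ x in Ioi 0, ENNReal.ofReal (min 1 (r / x)) * (v x : ℝ≥0∞) := by
  calc ∫⁻ s in Ioc 0 r, hardyAdj v s
      = ∫⁻ s in Ioc 0 r, ∫⁻ x in Ici s, (v x : ℝ≥0∞) / ENNReal.ofReal x ∂volume.restrict (Ioi 0) :=
        setLIntegral_congr_fun measurableSet_Ioc fun s hs => by
          rw [Measure.restrict_restrict measurableSet_Ici,
            inter_eq_left.2 (Ici_subset_Ioi.2 hs.1), hardyAdj]
    _ = ∫⁻ x in Ioi 0, volume (Ioc 0 r ∩ Iic x) * ((v x : ℝ≥0∞) / ENNReal.ofReal x) :=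
        (lintegral_measure_inter_Iic_mul measurableSet_Ioc (by fun_prop)).symm
    _ = ∫⁻ x in Ioi 0, ENNReal.ofReal (min 1 (r / x)) * (v x : ℝ≥0∞) :=
        setLIntegral_congr_fun measurableSet_Ioi fun x (hx : 0 < x) => by
          rw [Ioc_inter_Iic, Real.volume_Ioc, sub_zero, ← ENNReal.ofReal_min_div_ofReal r hx,
            ENNReal.div_eq_inv_mul, ENNReal.div_eq_inv_mul]
          ring

theorem setLIntegral_Ioc_hardyAdj_le (hv : Measurable v) (hpf : IocIntegralsPosFinite v) {r : ℝ}
    (hr : 0 < r) :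
    ∫⁻ s in Ioc 0 r, hardyAdj v s ≤ B1norm1 v * ∫⁻ s in Ioc 0 r, (v s : ℝ≥0∞) := by
  obtain ⟨hpos, hfin⟩ := hpf r hr
  rw [setLIntegral_Ioc_hardyAdj hv, ← ENNReal.div_le_iff hpos.ne' hfin.ne]
  exact le_iSup₂ (f := fun r (_ : 0 < r) =>
    (∫⁻ x in Ioi (0 : ℝ), ENNReal.ofReal (min 1 (r / x)) * (v x : ℝ≥0∞)) /
      ∫⁻ x in Ioc (0 : ℝ) r, (v x : ℝ≥0∞)) r hr

theorem setLIntegral_Ioi_hardyAdj_le (hv : Measurable v) (hpf : IocIntegralsPosFinite v) :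
    ∫⁻ s in Ioi 0, hardyAdj v s ≤ B1norm1 v * ∫⁻ s in Ioi 0, (v s : ℝ≥0∞) := by
  have hIoi : Ioi (0 : ℝ) = ⋃ n : ℕ, Ioc 0 ((n : ℝ) + 1) := by
    ext x
    simp only [mem_Ioi, mem_iUnion, mem_Ioc]
    refine ⟨fun hx => ?_, fun ⟨_, hx, _⟩ => hx⟩
    obtain ⟨n, hn⟩ := exists_nat_ge x
    exact ⟨n, hx, hn.trans (le_add_of_nonneg_right zero_le_one)⟩
  have hdir : Directed (· ⊆ ·) fun n : ℕ => Ioc (0 : ℝ) ((n : ℝ) + 1) :=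
    Monotone.directed_le fun m n hmn => Ioc_subset_Ioc_right (by gcongr)
  rw [hIoi, setLIntegral_iUnion_of_directed _ hdir]
  refine iSup_le fun n => (setLIntegral_Ioc_hardyAdj_le hv hpf (by positivity)).trans ?_
  exact mul_le_mul_right (lintegral_mono_set (subset_iUnion (fun n : ℕ => Ioc (0 : ℝ) (n + 1)) n)) _

theorem DecSet1.eq_Ioi_or_ae_eq_Ioc {S : Set ℝ} (hS : DecSet1 S) :
    S = Ioi 0 ∨ ∃ r, S =ᵐ[volume] Ioc 0 r := by
  by_cases hall : Ioi 0 ⊆ S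
  · exact Or.inl (hS.1.antisymm hall)
  obtain ⟨c, hc, hcS⟩ := not_subset.1 hall
  have hbdd : BddAbove S := ⟨c, fun s hs => le_of_not_gt fun hcs => hcS (hS.2 s hs c hc hcs.le)⟩
  have hIoo : Ioo 0 (sSup S) ⊆ S := fun x hx => by
    rcases S.eq_empty_or_nonempty with rfl | hne
    · exact absurd (hx.1.trans hx.2) (by simp)
    obtain ⟨s, hs, hxs⟩ := exists_lt_of_lt_csSup hne hx.2
    exact hS.2 s hs x hx.1 hxs.le
  have hIoc : S ⊆ Ioc 0 (sSup S) := fun s hs => ⟨hS.1 hs, le_csSup hbdd hs⟩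
  exact Or.inr ⟨sSup S, hIoc.eventuallyLE.antisymm (Ioo_ae_eq_Ioc.symm.le.trans hIoo.eventuallyLE)⟩

theorem DecSet1.setLIntegral_hardyAdj_le {S : Set ℝ} (hS : DecSet1 S) (hv : Measurable v)
    (hpf : IocIntegralsPosFinite v) :
    ∫⁻ s in S, hardyAdj v s ≤ B1norm1 v * ∫⁻ s in S, (v s : ℝ≥0∞) := by
  rcases hS.eq_Ioi_or_ae_eq_Ioc with rfl | ⟨r, hr⟩
  · exact setLIntegral_Ioi_hardyAdj_le hv hpf
  rw [setLIntegral_congr hr, setLIntegral_congr hr]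
  rcases le_or_gt r 0 with h | h
  · simp [Ioc_eq_empty_of_le h]
  · exact setLIntegral_Ioc_hardyAdj_le hv hpf h

end OneDimensional

section TwoDimensional

variable {D : Set (ℝ × ℝ)}

theorem DecSet2.decSet1_preimage_prodMk_left (hD : DecSet2 D) (x : ℝ) : DecSet1 (Prod.mk x ⁻¹' D) :=
  ⟨fun _ hy => (hD.1 hy).2, fun _ hy _ hy' hyy' => hD.2 _ hy (x, _) (hD.1 hy).1 le_rfl hy' hyy'⟩

theorem DecSet2.decSet1_preimage_prodMk_right (hD : DecSet2 D) (y : ℝ) : DecSet1 ((·, y) ⁻¹' D) :=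
  ⟨fun _ hx => (hD.1 hx).1, fun _ hx _ hx' hxx' => hD.2 _ hx (_, y) hx' hxx' (hD.1 hx).2 le_rfl⟩

theorem DecSet2.exists_measurable_ae_eq (hD : DecSet2 D) :
    ∃ D', MeasurableSet D' ∧ DecSet2 D' ∧ D =ᵐ[volume] D' := by
  classical
  -- the value `⊤` on `x ≤ 0` only serves to make `height` antitone, hence measurable
  let height : ℝ → ℝ≥0∞ := fun x =>
    if x ≤ 0 then ⊤ else ⨆ y ∈ Prod.mk x ⁻¹' D, ENNReal.ofReal y
  have hanti : Antitone height := by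
    intro x₁ x₂ h
    by_cases h₁ : x₁ ≤ 0
    · simp [height, h₁]
    simp only [height, if_neg h₁, if_neg fun h₂ => h₁ (h.trans h₂)]
    exact iSup₂_mono' fun y hy =>
      ⟨y, hD.2 _ hy (x₁, y) (not_le.1 h₁) h (hD.1 hy).2 le_rfl, le_rfl⟩
  have hm : Measurable height := hanti.measurable
  have hle : ∀ z ∈ D, ENNReal.ofReal z.2 ≤ height z.1 := fun z hz => by
    have hz₁ : ¬z.1 ≤ 0 := not_le.2 (hD.1 hz).1
    simp only [height, if_neg hz₁]
    exact le_iSup₂ (f := fun y (_ : y ∈ Prod.mk z.1 ⁻¹' D) => ENNReal.ofReal y) z.2 hz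
  let D' := {z : ℝ × ℝ | 0 < z.1 ∧ 0 < z.2 ∧ ENNReal.ofReal z.2 < height z.1}
  have hD'D : D' ⊆ D := by
    rintro z ⟨hz₁, hz₂, hlt⟩
    simp only [height, if_neg (not_le.2 hz₁), lt_iSup_iff] at hlt
    obtain ⟨y, hy, hzy⟩ := hlt
    exact hD.2 _ hy z hz₁ le_rfl hz₂ ((ENNReal.ofReal_lt_ofReal_iff (hD.1 hy).2).1 hzy).le
  let G := {z : ℝ × ℝ | 0 < z.2 ∧ ENNReal.ofReal z.2 = height z.1}
  have hDG : D \ D' ⊆ G := fun z ⟨hz, hz'⟩ =>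
    ⟨(hD.1 hz).2, (hle z hz).antisymm (not_lt.1 fun hlt => hz' ⟨(hD.1 hz).1, (hD.1 hz).2, hlt⟩)⟩
  have hG : volume G = 0 := by
    have hGm : MeasurableSet G := (measurableSet_lt measurable_const measurable_snd).inter
      (measurableSet_eq_fun (by fun_prop) (hm.comp measurable_fst))
    rw [Measure.volume_eq_prod, Measure.measure_prod_null hGm]
    refine ae_of_all _ fun x => Set.Subsingleton.measure_zero ?_ _
    rintro y₁ ⟨hy₁, h₁⟩ y₂ ⟨hy₂, h₂⟩
    exact (ENNReal.ofReal_eq_ofReal_iff hy₁.le hy₂.le).1 (h₁.trans h₂.symm)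
  refine ⟨D', ?_, ⟨fun z hz => ⟨hz.1, hz.2.1⟩, fun z hz w hw₁ hw₁' hw₂ hw₂' => ⟨hw₁, hw₂,
    (ENNReal.ofReal_le_ofReal hw₂').trans_lt (hz.2.2.trans_le (hanti hw₁'))⟩⟩,
    (ae_le_set.2 (measure_mono_null hDG hG)).antisymm hD'D.eventuallyLE⟩
  exact (measurableSet_lt measurable_const measurable_fst).inter
    ((measurableSet_lt measurable_const measurable_snd).inter
      (measurableSet_lt (by fun_prop) (hm.comp measurable_fst)))

theorem hardy2_indicator_one (hD : MeasurableSet D) (hDQ : D ⊆ Ioi 0 ×ˢ Ioi 0) (z : ℝ × ℝ) :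
    hardy2 (D.indicator fun _ => 1) z = volume (D ∩ Iic z) / ENNReal.ofReal (z.1 * z.2) := by
  have hbox : D ∩ Ioc 0 z.1 ×ˢ Ioc 0 z.2 = D ∩ Iic z := by
    rw [← Ioi_inter_Iic, ← Ioi_inter_Iic, ← prod_inter_prod, ← inter_assoc,
      inter_eq_left.2 hDQ, Iic_prod_eq]
  simp only [hardy2, ENNReal.coe_indicator, ENNReal.coe_one]
  rw [lintegral_indicator_const hD, one_mul, Measure.restrict_apply hD, hbox]

theorem hardy2_congr_ae {D' : Set (ℝ × ℝ)} (h : D =ᵐ[volume] D') :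
    hardy2 (D.indicator fun _ => 1) = hardy2 (D'.indicator fun _ => 1) := by
  ext z
  simp only [hardy2, ENNReal.coe_indicator, ENNReal.coe_one]
  congr 1
  exact lintegral_congr_ae (ae_restrict_of_ae (indicator_ae_eq_of_ae_eq_set h))

theorem setLIntegral_hardy2_mul {u₁ u₂ : ℝ → ℝ≥0} (h₁ : Measurable u₁) (h₂ : Measurable u₂)
    (hD : MeasurableSet D) (hDQ : D ⊆ Ioi 0 ×ˢ Ioi 0) :
    ∫⁻ z in Ioi 0 ×ˢ Ioi 0, hardy2 (D.indicator fun _ => 1) z * ((u₁ z.1 * u₂ z.2 : ℝ≥0) : ℝ≥0∞)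
      = ∫⁻ z in D, hardyAdj u₁ z.1 * hardyAdj u₂ z.2 := by
  let w : ℝ × ℝ → ℝ≥0∞ := fun z =>
    (u₁ z.1 : ℝ≥0∞) / ENNReal.ofReal z.1 * ((u₂ z.2 : ℝ≥0∞) / ENNReal.ofReal z.2)
  have hQ : MeasurableSet (Ioi (0 : ℝ) ×ˢ Ioi (0 : ℝ)) := measurableSet_Ioi.prod measurableSet_Ioi
  calc ∫⁻ z in Ioi 0 ×ˢ Ioi 0,
        hardy2 (D.indicator fun _ => 1) z * ((u₁ z.1 * u₂ z.2 : ℝ≥0) : ℝ≥0∞)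
      = ∫⁻ z in Ioi 0 ×ˢ Ioi 0, volume (D ∩ Iic z) * w z :=
        setLIntegral_congr_fun hQ fun z ⟨(hz₁ : 0 < z.1), (hz₂ : 0 < z.2)⟩ => by
          rw [hardy2_indicator_one hD hDQ, ENNReal.ofReal_mul hz₁.le, ENNReal.div_eq_inv_mul,
            ENNReal.mul_inv (.inl (by simpa using hz₁)) (.inl ENNReal.ofReal_ne_top)]
          simp only [w, ENNReal.div_eq_inv_mul, ENNReal.coe_mul]
          ring
    _ = ∫⁻ a in D, ∫⁻ z in Ici a, w z ∂volume.restrict (Ioi 0 ×ˢ Ioi 0) :=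
        lintegral_measure_inter_Iic_mul hD (by fun_prop)
    _ = ∫⁻ z in D, hardyAdj u₁ z.1 * hardyAdj u₂ z.2 :=
        setLIntegral_congr_fun hD fun a ha => by
          have hIci : Ici a ⊆ Ioi 0 ×ˢ Ioi 0 := fun z hz =>
            ⟨(hDQ ha).1.trans_le hz.1, (hDQ ha).2.trans_le hz.2⟩
          rw [Measure.restrict_restrict measurableSet_Ici, inter_eq_left.2 hIci, Ici_prod_eq,
            Measure.volume_eq_prod]
          exact setLIntegral_prod_mul (f := fun x => (u₁ x : ℝ≥0∞) / ENNReal.ofReal x)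
            (g := fun y => (u₂ y : ℝ≥0∞) / ENNReal.ofReal y) (by fun_prop) (by fun_prop) _ _

end TwoDimensional

section ProductWeight

variable {u₁ u₂ : ℝ → ℝ≥0}

theorem B1norm1_mul_le_B1norm2 (h₁ : Measurable u₁) (h₂ : Measurable u₂)
    (hpf₁ : IocIntegralsPosFinite u₁) (hpf₂ : IocIntegralsPosFinite u₂) :
    B1norm1 u₁ * B1norm1 u₂ ≤ B1norm2 (fun z => u₁ z.1 * u₂ z.2) := by
  simp only [B1norm1, ENNReal.iSup_mul, ENNReal.mul_iSup]
  refine iSup₂_le fun s hs => iSup₂_le fun r hr => ?_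
  obtain ⟨hpos₁, hfin₁⟩ := hpf₁ r hr
  obtain ⟨hpos₂, hfin₂⟩ := hpf₂ s hs
  let R := Ioc (0 : ℝ) r ×ˢ Ioc (0 : ℝ) s
  have hR : DecSet2 R := ⟨prod_mono Ioc_subset_Ioi_self Ioc_subset_Ioi_self,
    fun z hz _ hw₁ hw₁' hw₂ hw₂' => ⟨⟨hw₁, hw₁'.trans hz.1.2⟩, hw₂, hw₂'.trans hz.2.2⟩⟩
  have hden : ∫⁻ z in R, ((u₁ z.1 * u₂ z.2 : ℝ≥0) : ℝ≥0∞) =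
      (∫⁻ x in Ioc 0 r, (u₁ x : ℝ≥0∞)) * ∫⁻ y in Ioc 0 s, (u₂ y : ℝ≥0∞) := by
    simp only [ENNReal.coe_mul]
    rw [Measure.volume_eq_prod]
    exact setLIntegral_prod_mul h₁.coe_nnreal_ennreal.aemeasurable
      h₂.coe_nnreal_ennreal.aemeasurable _ _
  have hnum : ∫⁻ z in Ioi 0 ×ˢ Ioi 0,
      hardy2 (R.indicator fun _ => 1) z * ((u₁ z.1 * u₂ z.2 : ℝ≥0) : ℝ≥0∞) =
      (∫⁻ x in Ioi 0, ENNReal.ofReal (min 1 (r / x)) * (u₁ x : ℝ≥0∞)) *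
        ∫⁻ y in Ioi 0, ENNReal.ofReal (min 1 (s / y)) * (u₂ y : ℝ≥0∞) := by
    rw [setLIntegral_hardy2_mul h₁ h₂ (measurableSet_Ioc.prod measurableSet_Ioc) hR.1,
      Measure.volume_eq_prod, setLIntegral_prod_mul measurable_hardyAdj.aemeasurable
        measurable_hardyAdj.aemeasurable,
      setLIntegral_Ioc_hardyAdj h₁, setLIntegral_Ioc_hardyAdj h₂]
  rw [← ENNReal.mul_div_mul_comm (.inl hpos₁.ne') (.inl hfin₁.ne), ← hnum, ← hden]
  refine le_iSup₂_of_le R hR (le_iSup₂_of_le ?_ ?_ le_rfl)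
  · rw [hden]; exact ENNReal.mul_pos hpos₁.ne' hpos₂.ne'
  · rw [hden]; exact ENNReal.mul_lt_top hfin₁ hfin₂

theorem DecSet2.setLIntegral_hardy2_mul_le {D : Set (ℝ × ℝ)} (hD : DecSet2 D)
    (hDm : MeasurableSet D) (h₁ : Measurable u₁) (h₂ : Measurable u₂)
    (hpf₁ : IocIntegralsPosFinite u₁) (hpf₂ : IocIntegralsPosFinite u₂) :
    ∫⁻ z in Ioi 0 ×ˢ Ioi 0, hardy2 (D.indicator fun _ => 1) z * ((u₁ z.1 * u₂ z.2 : ℝ≥0) : ℝ≥0∞)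
      ≤ B1norm1 u₁ * B1norm1 u₂ * ∫⁻ z in D, ((u₁ z.1 * u₂ z.2 : ℝ≥0) : ℝ≥0∞) := by
  rw [setLIntegral_hardy2_mul h₁ h₂ hDm hD.1, Measure.volume_eq_prod]
  calc ∫⁻ z in D, hardyAdj u₁ z.1 * hardyAdj u₂ z.2 ∂volume.prod volume
      ≤ B1norm1 u₂ * ∫⁻ z in D, hardyAdj u₁ z.1 * u₂ z.2 ∂volume.prod volume :=
        setLIntegral_mul_le_of_forall_setLIntegral_le hDm measurable_hardyAdj measurable_hardyAdj
          h₂.coe_nnreal_ennreal fun x =>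
            (hD.decSet1_preimage_prodMk_left x).setLIntegral_hardyAdj_le h₂ hpf₂
    _ ≤ B1norm1 u₂ * (B1norm1 u₁ * ∫⁻ z in D, u₁ z.1 * (u₂ z.2 : ℝ≥0∞) ∂volume.prod volume) :=
        mul_le_mul_right (setLIntegral_mul_le_of_forall_setLIntegral_le' hDm
          h₂.coe_nnreal_ennreal measurable_hardyAdj h₁.coe_nnreal_ennreal fun y =>
            (hD.decSet1_preimage_prodMk_right y).setLIntegral_hardyAdj_le h₁ hpf₁) _
    _ = B1norm1 u₁ * B1norm1 u₂ *
          ∫⁻ z in D, ((u₁ z.1 * u₂ z.2 : ℝ≥0) : ℝ≥0∞) ∂volume.prod volume := by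
        simp only [ENNReal.coe_mul]
        ring

end ProductWeight

/-- For weights `u₁, u₂` on `(0,∞)` with `0 < ∫_0^r u_j < ∞` for all
`r > 0`, the product weight `u(x,y) = u₁(x)u₂(y)` satisfies
`‖u‖_{B₁((0,∞)²)} = ‖u₁‖_{B₁} ‖u₂‖_{B₁}`. -/
theorem stmt15 (u₁ u₂ : ℝ → ℝ≥0) (h₁ : Measurable u₁) (h₂ : Measurable u₂)
    (hfin₁ : ∀ r : ℝ, 0 < r →
      0 < ∫⁻ t in Set.Ioc (0 : ℝ) r, (u₁ t : ℝ≥0∞) ∧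
        ∫⁻ t in Set.Ioc (0 : ℝ) r, (u₁ t : ℝ≥0∞) < ⊤)
    (hfin₂ : ∀ r : ℝ, 0 < r →
      0 < ∫⁻ t in Set.Ioc (0 : ℝ) r, (u₂ t : ℝ≥0∞) ∧
        ∫⁻ t in Set.Ioc (0 : ℝ) r, (u₂ t : ℝ≥0∞) < ⊤) :
    B1norm2 (fun z => u₁ z.1 * u₂ z.2) = B1norm1 u₁ * B1norm1 u₂ := by
  refine le_antisymm ?_ (B1norm1_mul_le_B1norm2 h₁ h₂ hfin₁ hfin₂)
  refine iSup₂_le fun D hD => iSup₂_le fun _ _ => ENNReal.div_le_of_le_mul ?_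
  obtain ⟨D', hD'm, hD', hae⟩ := hD.exists_measurable_ae_eq
  rw [hardy2_congr_ae hae, setLIntegral_congr hae]
  exact hD'.setLIntegral_hardy2_mul_le hD'm h₁ h₂ hfin₁ hfin₂
end

section
/- Let H be the one-dimensional Hardy operator Hf(t) = (1/t) ∫₀^t f(s) ds on (0,∞), let h > 0 and let m ≥ 1 be an integer. Then the m-fold iterate of H applied to the indicator function of (0,h) satisfies: H^m χ_{(0,h)}(t) = 1 for 0 < t ≤ h, and H^m χ_{(0,h)}(t) = (h/t) ∑_{j=0}^{m−1} (1/j!) (log(t/h))^j for t > h. -/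
open MeasureTheory Set
open scoped ENNReal NNReal

/-- The one-dimensional Hardy operator `Hf(t) = (1/t) ∫₀^t f(s) ds`. -/
noncomputable def hardyH (f : ℝ → ℝ) (t : ℝ) : ℝ :=
  (1 / t) * ∫ s in Set.Ioc (0 : ℝ) t, f s

/-!
Since `H g (t)` only sees `g` on `(0, t]` up to null sets, it suffices to track `H^k χ` on
`(0, h)`, where it stays `1`, and on `(h, ∞)`, where it is `(h/s) E_k(log (s/h))` with
`E_k(x) = ∑_{j<k} x^j / j!`. Since `E_{k+1}' = E_k` and `E_{k+1}(0) = 1`, the function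
`s ↦ h E_{k+1}(log (s/h))` is an antiderivative giving `∫_h^t (h/s) E_k(log (s/h)) ds =
h (E_{k+1}(log (t/h)) - 1)`, and adding the contribution `h` of
`(0, h]` gives `H^{k+1} χ (t) = (h/t) E_{k+1}(log (t/h))`.
-/

open Nat in
/-- The Taylor polynomial of `exp` of degree `m - 1`, written exactly as the sum in `stmt17`. -/
noncomputable def expTrunc (m : ℕ) (x : ℝ) : ℝ :=
  ∑ j ∈ Finset.range m, (1 / (j ! : ℝ)) * x ^ j

@[simp]
lemma expTrunc_zero (x : ℝ) : expTrunc 0 x = 0 := by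
  simp [expTrunc]

open Nat in
lemma expTrunc_succ (m : ℕ) (x : ℝ) :
    expTrunc (m + 1) x = 1 + ∑ j ∈ Finset.range m, (1 / ((j + 1) ! : ℝ)) * x ^ (j + 1) := by
  simp [expTrunc, Finset.sum_range_succ', add_comm]

@[simp]
lemma expTrunc_succ_zero (m : ℕ) : expTrunc (m + 1) 0 = 1 := by
  simp [expTrunc_succ]

lemma continuous_expTrunc (m : ℕ) : Continuous (expTrunc m) := by
  unfold expTrunc; fun_prop

open Nat in
lemma hasDerivAt_expTrunc_succ (m : ℕ) (x : ℝ) :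
    HasDerivAt (expTrunc (m + 1)) (expTrunc m x) x := by
  have hsum : HasDerivAt (fun y => ∑ j ∈ Finset.range m, (1 / ((j + 1) ! : ℝ)) * y ^ (j + 1))
      (expTrunc m x) x := by
    refine HasDerivAt.fun_sum (fun j _ =>
      ((hasDerivAt_pow (j + 1) x).const_mul _).congr_deriv ?_)
    rw [Nat.factorial_succ]
    push_cast
    field_simp
  simpa only [← expTrunc_succ] using hsum.const_add 1

lemma continuousOn_div_mul_expTrunc_log {h : ℝ} (hh : 0 < h) (m : ℕ) :
    ContinuousOn (fun s => h / s * expTrunc m (Real.log (s / h))) (Ioi 0) :=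
  (continuousOn_const.div continuousOn_id fun _ hs => (mem_Ioi.1 hs).ne').mul <|
    (continuous_expTrunc m).comp_continuousOn <|
      (continuousOn_id.div_const h).log fun _ hs => (div_pos hs hh).ne'

lemma integral_div_mul_expTrunc_log {h t : ℝ} (hh : 0 < h) (hht : h ≤ t) (m : ℕ) :
    ∫ s in h..t, h / s * expTrunc m (Real.log (s / h)) =
      h * (expTrunc (m + 1) (Real.log (t / h)) - 1) := by
  have hpos : ∀ s ∈ uIcc h t, 0 < s := fun s hs => hh.trans_le (uIcc_of_le hht ▸ hs).1
  have hderiv : ∀ s ∈ uIcc h t, HasDerivAt (fun s => h * expTrunc (m + 1) (Real.log (s / h)))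
      (h / s * expTrunc m (Real.log (s / h))) s := by
    intro s hs
    have hlog := ((hasDerivAt_id' s).div_const h).log (div_pos (hpos s hs) hh).ne'
    refine (((hasDerivAt_expTrunc_succ m _).comp s hlog).const_mul h).congr_deriv ?_
    field_simp [(hpos s hs).ne']
  have hcont := (continuousOn_div_mul_expTrunc_log hh m).mono fun s hs => mem_Ioi.2 (hpos s hs)
  rw [intervalIntegral.integral_eq_sub_of_hasDerivAt hderiv hcont.intervalIntegrable, div_self hh.ne', Real.log_one, expTrunc_succ_zero]
  ring

lemma setIntegral_Ioc_eq_of_eqOn_one {g : ℝ → ℝ} {h u : ℝ} (hg : EqOn g 1 (Ioo 0 h))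
    (hu : 0 ≤ u) (huh : u ≤ h) : ∫ s in Ioc 0 u, g s = u := by
  rw [← setIntegral_congr_set Ioo_ae_eq_Ioc,
    setIntegral_congr_fun measurableSet_Ioo (hg.mono (Ioo_subset_Ioo_right huh))]
  simp [hu]

lemma hardyH_eq_one_of_eqOn {g : ℝ → ℝ} {h t : ℝ} (hg : EqOn g 1 (Ioo 0 h)) (ht : 0 < t)
    (hth : t ≤ h) : hardyH g t = 1 := by
  rw [hardyH, setIntegral_Ioc_eq_of_eqOn_one hg ht.le hth]
  field_simp

lemma hardyH_eq_div_mul_expTrunc_log {g : ℝ → ℝ} {h t : ℝ} {m : ℕ} (hh : 0 < h)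
    (hg : EqOn g 1 (Ioo 0 h))
    (hg' : EqOn g (fun s => h / s * expTrunc m (Real.log (s / h))) (Ioi h)) (ht : h < t) :
    hardyH g t = h / t * expTrunc (m + 1) (Real.log (t / h)) := by
  have hint₁ : IntegrableOn g (Ioc 0 h) :=
    (integrableOn_Ioc_iff_integrableOn_Ioo enorm_ne_top).2
      ((integrableOn_const (by simp)).congr_fun hg.symm measurableSet_Ioo)
  have hint₂ : IntegrableOn g (Ioc h t) :=
    (((continuousOn_div_mul_expTrunc_log hh m).mono fun s hs => hh.trans_le hs.1).integrableOn_Icc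
      |>.mono_set Ioc_subset_Icc_self).congr_fun (hg'.mono Ioc_subset_Ioi_self).symm
      measurableSet_Ioc
  rw [hardyH, ← Ioc_union_Ioc_eq_Ioc hh.le ht.le,
    setIntegral_union (Ioc_disjoint_Ioc_of_le le_rfl) measurableSet_Ioc hint₁ hint₂,
    setIntegral_Ioc_eq_of_eqOn_one hg hh.le le_rfl,
    setIntegral_congr_fun measurableSet_Ioc (hg'.mono Ioc_subset_Ioi_self),
    ← intervalIntegral.integral_of_le ht.le, integral_div_mul_expTrunc_log hh ht.le]
  field_simp
  ring

/-- For `h > 0` and `m ≥ 1`, the `m`-fold iterate of the Hardy operator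
applied to the indicator of `(0,h)` equals `1` on `(0,h]` and equals
`(h/t) ∑_{j=0}^{m-1} (1/j!) log(t/h)^j` for `t > h`. -/
theorem stmt17 (h : ℝ) (hh : 0 < h) (m : ℕ) (hm : 1 ≤ m) :
    (∀ t : ℝ, 0 < t → t ≤ h →
      (hardyH^[m]) ((Set.Ioo (0 : ℝ) h).indicator fun _ => (1 : ℝ)) t = 1) ∧
    (∀ t : ℝ, h < t →
      (hardyH^[m]) ((Set.Ioo (0 : ℝ) h).indicator fun _ => (1 : ℝ)) t =
        (h / t) * ∑ j ∈ Finset.range m,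
          (1 / (Nat.factorial j : ℝ)) * Real.log (t / h) ^ j) := by
  set χ : ℝ → ℝ := (Ioo 0 h).indicator fun _ => 1
  -- `Ioo`, not `Ioc`: `χ h = 0`, so the value `1` at `h` is only reached for `k ≥ 1`.
  have hiter : ∀ k, EqOn (hardyH^[k] χ) 1 (Ioo 0 h) ∧
      EqOn (hardyH^[k] χ) (fun s => h / s * expTrunc k (Real.log (s / h))) (Ioi h) := by
    intro k
    induction k with
    | zero =>
      exact ⟨fun s hs => indicator_of_mem hs (fun _ => 1),
        fun s hs => by simp [χ, indicator_of_notMem fun hs' : s ∈ Ioo 0 h => hs'.2.not_gt hs]⟩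
    | succ k ih =>
      simp only [Function.iterate_succ_apply']
      exact ⟨fun s hs => hardyH_eq_one_of_eqOn ih.1 hs.1 hs.2.le,
        fun s hs => hardyH_eq_div_mul_expTrunc_log hh ih.1 ih.2 hs⟩
  obtain ⟨k, rfl⟩ := Nat.exists_eq_add_of_le' hm
  simp only [Function.iterate_succ_apply']
  exact ⟨fun t ht hth => hardyH_eq_one_of_eqOn (hiter k).1 ht hth,
    fun t ht => hardyH_eq_div_mul_expTrunc_log hh (hiter k).1 (hiter k).2 ht⟩
end

section
/- For every p with 0 < p < 1 there exists a constant C_p > 0 such that for every decreasing measurable function g : (0,∞) → [0,∞), ∫₀^∞ g(t) dt ≤ C_p ( ∫₀^∞ t^{p−1} g(t)^p dt )^{1/p}. -/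
/-!
Cut `(0, ∞)` into the dyadic blocks `(2ⁿ, 2ⁿ⁺¹]`. As `g` decreases, `∫ g ≤ ∑ₙ g(2ⁿ) 2ⁿ`, while on
the block `(2ⁿ⁻¹, 2ⁿ]` the integrand `t^(p-1) g(t)^p` is at least `2^(n(p-1)) g(2ⁿ)^p`, so that
`∑ₙ (g(2ⁿ) 2ⁿ)^p ≤ 2 ∫ t^(p-1) g^p`. The two sums are compared by `(∑ aₙ)^p ≤ ∑ aₙ^p`,
valid for `p ≤ 1`; this gives `C_p = 2^(1/p)`.
-/

open MeasureTheory Set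
open scoped ENNReal NNReal

namespace ENNReal

variable {ι : Type*} {p : ℝ}

theorem rpow_finsetSum_le_finsetSum_rpow (hp0 : 0 < p) (hp1 : p ≤ 1) (s : Finset ι)
    (a : ι → ℝ≥0∞) : (∑ i ∈ s, a i) ^ p ≤ ∑ i ∈ s, a i ^ p := by
  induction s using Finset.cons_induction with
  | empty => simp [zero_rpow_of_pos hp0]
  | cons i s hi ih =>
    rw [Finset.sum_cons, Finset.sum_cons]
    exact (rpow_add_le_add_rpow _ _ hp0.le hp1).trans (by gcongr)

theorem rpow_tsum_le_tsum_rpow (hp0 : 0 < p) (hp1 : p ≤ 1) (a : ι → ℝ≥0∞) :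
    (∑' i, a i) ^ p ≤ ∑' i, a i ^ p := by
  rw [← le_rpow_inv_iff hp0, ENNReal.tsum_eq_iSup_sum]
  refine iSup_le fun s => (le_rpow_inv_iff hp0).2 ?_
  exact (rpow_finsetSum_le_finsetSum_rpow hp0 hp1 s a).trans (ENNReal.sum_le_tsum s)

end ENNReal

theorem Real.lintegral_Ioi_zero_eq_tsum_Ioc_zpow {r : ℝ} (hr : 1 < r) (f : ℝ → ℝ≥0∞) :
    ∫⁻ t in Ioi 0, f t = ∑' n : ℤ, ∫⁻ t in Ioc (r ^ n) (r ^ (n + 1)), f t := by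
  have hcover : Ioi (0 : ℝ) = ⋃ n : ℤ, Ioc (r ^ n) (r ^ (n + 1)) := by
    ext x
    simp only [mem_Ioi, mem_iUnion]
    refine ⟨fun hx => exists_mem_Ioc_zpow hx hr, ?_⟩
    rintro ⟨n, hn, -⟩
    exact (zpow_pos (zero_lt_one.trans hr) n).trans hn
  have hdisj : Pairwise (Function.onFun Disjoint fun n : ℤ => Ioc (r ^ n) (r ^ (n + 1))) := by
    simpa only [Order.succ_eq_add_one] using
      (zpow_right_mono₀ hr.le).pairwise_disjoint_on_Ioc_succ
  rw [hcover, lintegral_iUnion (fun _ => measurableSet_Ioc) hdisj]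

section Antitone

variable {f : ℝ → ℝ≥0∞} {a b : ℝ}

theorem setLIntegral_Ioc_le_of_antitoneOn (hf : AntitoneOn f (Icc a b)) :
    ∫⁻ t in Ioc a b, f t ≤ f a * volume (Ioc a b) := by
  rw [← setLIntegral_const]
  refine setLIntegral_mono measurable_const fun t ht => ?_
  exact hf ⟨le_rfl, ht.1.le.trans ht.2⟩ (Ioc_subset_Icc_self ht) ht.1.le

theorem mul_volume_le_setLIntegral_Ioc_of_antitoneOn (hf : AntitoneOn f (Icc a b)) :
    f b * volume (Ioc a b) ≤ ∫⁻ t in Ioc a b, f t := by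
  rw [← setLIntegral_const]
  refine setLIntegral_mono' measurableSet_Ioc fun t ht => ?_
  exact hf (Ioc_subset_Icc_self ht) ⟨ht.1.le.trans ht.2, le_rfl⟩ ht.2

theorem AntitoneOn.ofReal_rpow_sub_one_mul_rpow {p : ℝ} (hf : AntitoneOn f (Ioi 0))
    (hp0 : 0 ≤ p) (hp1 : p ≤ 1) :
    AntitoneOn (fun t => ENNReal.ofReal (t ^ (p - 1)) * f t ^ p) (Ioi 0) := by
  intro s hs t ht hst
  dsimp only
  gcongr ?_ * ?_
  · exact ENNReal.ofReal_le_ofReal (Real.rpow_le_rpow_of_nonpos hs hst (by linarith))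
  · exact ENNReal.rpow_le_rpow (hf hs ht hst) hp0

end Antitone

section Dyadic

variable {f : ℝ → ℝ≥0∞}

theorem volume_Ioc_two_zpow (n : ℤ) :
    volume (Ioc ((2 : ℝ) ^ n) (2 ^ (n + 1))) = ENNReal.ofReal (2 ^ n) := by
  rw [Real.volume_Ioc, zpow_add_one₀ two_ne_zero]
  ring_nf

theorem lintegral_Ioi_zero_le_tsum_dyadic (hf : AntitoneOn f (Ioi 0)) :
    ∫⁻ t in Ioi 0, f t ≤ ∑' n : ℤ, f (2 ^ n) * ENNReal.ofReal (2 ^ n) := by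
  rw [Real.lintegral_Ioi_zero_eq_tsum_Ioc_zpow one_lt_two]
  refine ENNReal.tsum_le_tsum fun n => ?_
  rw [← volume_Ioc_two_zpow]
  exact setLIntegral_Ioc_le_of_antitoneOn
    (hf.mono fun t ht => (zpow_pos two_pos n).trans_le ht.1)

theorem tsum_dyadic_rpow_le {p : ℝ} (hp0 : 0 ≤ p) (hp1 : p ≤ 1) (hf : AntitoneOn f (Ioi 0)) :
    ∑' n : ℤ, (f (2 ^ n) * ENNReal.ofReal (2 ^ n)) ^ p ≤
      2 * ∫⁻ t in Ioi 0, ENNReal.ofReal (t ^ (p - 1)) * f t ^ p := by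
  set h : ℝ → ℝ≥0∞ := fun t => ENNReal.ofReal (t ^ (p - 1)) * f t ^ p
  have hterm (n : ℤ) : (f (2 ^ (n + 1)) * ENNReal.ofReal (2 ^ (n + 1))) ^ p =
      2 * (h (2 ^ (n + 1)) * volume (Ioc ((2 : ℝ) ^ n) (2 ^ (n + 1)))) := by
    have hb : (0 : ℝ) < 2 ^ (n + 1) := zpow_pos two_pos _
    have hreal : ((2 : ℝ) ^ (n + 1)) ^ p = 2 * (((2 : ℝ) ^ (n + 1)) ^ (p - 1) * 2 ^ n) := by
      rw [Real.rpow_sub_one hb.ne', zpow_add_one₀ two_ne_zero]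
      field_simp
    rw [volume_Ioc_two_zpow, ENNReal.mul_rpow_of_nonneg _ _ hp0,
      ENNReal.ofReal_rpow_of_pos hb, hreal, ENNReal.ofReal_mul zero_le_two,
      ENNReal.ofReal_mul (by positivity), ENNReal.ofReal_ofNat]
    ring
  calc ∑' n : ℤ, (f (2 ^ n) * ENNReal.ofReal (2 ^ n)) ^ p
      = ∑' n : ℤ, (f (2 ^ (n + 1)) * ENNReal.ofReal (2 ^ (n + 1))) ^ p :=
        ((Equiv.addRight 1).tsum_eq fun n : ℤ => (f (2 ^ n) * ENNReal.ofReal (2 ^ n)) ^ p).symm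
    _ ≤ ∑' n : ℤ, 2 * ∫⁻ t in Ioc ((2 : ℝ) ^ n) (2 ^ (n + 1)), h t := by
        refine ENNReal.tsum_le_tsum fun n => ?_
        rw [hterm]
        gcongr
        exact mul_volume_le_setLIntegral_Ioc_of_antitoneOn
          ((hf.ofReal_rpow_sub_one_mul_rpow hp0 hp1).mono
            fun t ht => (zpow_pos two_pos n).trans_le ht.1)
    _ = 2 * ∫⁻ t in Ioi 0, h t := by
        rw [ENNReal.tsum_mul_left, Real.lintegral_Ioi_zero_eq_tsum_Ioc_zpow one_lt_two]

end Dyadic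

/-- For every `0 < p < 1` there is a constant `C_p > 0` such that for every
decreasing measurable `g : (0,∞) → [0,∞)`,
`∫₀^∞ g(t) dt ≤ C_p (∫₀^∞ t^(p-1) g(t)^p dt)^(1/p)`. -/
theorem stmt18 (p : ℝ) (hp0 : 0 < p) (hp1 : p < 1) :
    ∃ C : ℝ, 0 < C ∧ ∀ g : ℝ → ℝ≥0, Measurable g →
      (∀ s t : ℝ, 0 < s → s ≤ t → g t ≤ g s) →
      ∫⁻ t in Set.Ioi (0 : ℝ), (g t : ℝ≥0∞) ≤
        ENNReal.ofReal C *
          (∫⁻ t in Set.Ioi (0 : ℝ),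
            ENNReal.ofReal (t ^ (p - 1)) * (g t : ℝ≥0∞) ^ p) ^ (1 / p) := by
  refine ⟨2 ^ (1 / p), by positivity, fun g _ hg => ?_⟩
  have hf : AntitoneOn (fun t => (g t : ℝ≥0∞)) (Ioi 0) := fun s hs t _ hst =>
    ENNReal.coe_le_coe.2 (hg s t hs hst)
  rw [← ENNReal.ofReal_rpow_of_pos two_pos, ENNReal.ofReal_ofNat,
    ← ENNReal.mul_rpow_of_nonneg _ _ (by positivity), one_div, ENNReal.le_rpow_inv_iff hp0]
  calc (∫⁻ t in Ioi 0, (g t : ℝ≥0∞)) ^ p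
      ≤ (∑' n : ℤ, (g (2 ^ n) : ℝ≥0∞) * ENNReal.ofReal (2 ^ n)) ^ p :=
        ENNReal.rpow_le_rpow (lintegral_Ioi_zero_le_tsum_dyadic hf) hp0.le
    _ ≤ ∑' n : ℤ, ((g (2 ^ n) : ℝ≥0∞) * ENNReal.ofReal (2 ^ n)) ^ p :=
        ENNReal.rpow_tsum_le_tsum_rpow hp0 hp1.le _
    _ ≤ _ := tsum_dyadic_rpow_le hp0.le hp1.le hf
end
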